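/- Adams consensus satisfies binary extension stability: if P is a profile of rooted phylogenetic trees on X, Y ⊆ X is nonempty, and φ_Ad(P|_Y) is a binary tree, then φ_Ad(P|_Y) = φ_Ad(P)|_Y. -/

import Mathlib

/-- A (candidate) rooted phylogenetic tree, encoded by its set of clusters. -/
abbrev PTree : Type := Finset (Finset ℕ)

/-- Two clusters are nested: disjoint or one contained in the other. -/
abbrev Nested (C D : Finset ℕ) : Prop := C ∩ D = ∅ ∨ C ⊆ D ∨ D ⊆ C

/-- `H` is a hierarchy on leaf set `X`: a rooted phylogenetic tree in `RP(X)`. -/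
structure IsHierarchy (X : Finset ℕ) (H : PTree) : Prop where
  subset_top : ∀ C ∈ H, C ⊆ X
  cluster_nonempty : ∀ C ∈ H, C.Nonempty
  top_mem : X ∈ H
  singleton_mem : ∀ x ∈ X, ({x} : Finset ℕ) ∈ H
  laminar : ∀ C ∈ H, ∀ D ∈ H, Nested C D

/-- Restriction `T|_Y` of a tree to a subset `Y` of the leaves. -/
def restrictT (H : PTree) (Y : Finset ℕ) : PTree :=
  (H.image (fun C => C ∩ Y)).filter (fun C => C.Nonempty)

/-- The maximal proper clusters of a tree on leaf set `X`. -/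
def maxProper (X : Finset ℕ) (T : PTree) : PTree :=
  T.filter (fun C => C ≠ X ∧ ∀ D ∈ T, C ⊂ D → D = X)

/-- Common refinement of two collections of blocks. -/
def meet2 (π π' : Finset (Finset ℕ)) : Finset (Finset ℕ) :=
  ((π ×ˢ π').image (fun p => p.1 ∩ p.2)).filter (fun B => B.Nonempty)

/-- Common refinement of a list of collections of blocks. -/
def meetAll : List (Finset (Finset ℕ)) → Finset (Finset ℕ)
  | [] => ∅
  | π :: L => L.foldl meet2 π

/-- Adams consensus, with fuel: the maximal proper clusters of the output are
the nonempty intersections of one maximal proper cluster from each input tree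
(the common refinement of the top partitions), and the construction recurses on
each such block with the restricted profile. -/
def adamsAux : ℕ → Finset ℕ → List PTree → PTree
  | 0, X, _ => {X}
  | n + 1, X, P =>
      let B := (meetAll (P.map (maxProper X))).filter (fun A => A ⊂ X)
      insert X (B.biUnion (fun A => adamsAux n A (P.map (fun T => restrictT T A))))

/-- Adams consensus of a profile of trees on leaf set `X`. -/
def adams (X : Finset ℕ) (P : List PTree) : PTree := adamsAux X.card X P

/-- `T` is a binary (fully resolved) tree on `X`. -/
def IsBinary (X : Finset ℕ) (T : PTree) : Prop := T.card = 2 * X.card - 1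


open Finset

lemma mem_restrictT {H : PTree} {Y D : Finset ℕ} :
    D ∈ restrictT H Y ↔ (∃ C ∈ H, C ∩ Y = D) ∧ D.Nonempty := by
  simp [restrictT, Finset.mem_filter, Finset.mem_image]

lemma restrictT_empty (H : PTree) : restrictT H (∅ : Finset ℕ) = ∅ := by
  ext D
  simp [mem_restrictT]
  rintro C _ rfl
  simp

lemma restrictT_eq_filter {X : Finset ℕ} {H : PTree} (hH : IsHierarchy X H)
    {A : Finset ℕ} (hA : A ∈ H) : restrictT H A = H.filter (· ⊆ A) := by
  ext D
  simp only [mem_restrictT, Finset.mem_filter]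
  constructor
  · rintro ⟨⟨C, hC, rfl⟩, hne⟩
    rcases hH.laminar C hC A hA with h | h | h
    · rw [h] at hne; exact absurd hne (by simp)
    · rw [Finset.inter_eq_left.mpr h]; exact ⟨hC, h⟩
    · rw [Finset.inter_eq_right.mpr h]; exact ⟨hA, le_refl _⟩
  · rintro ⟨hD, hsub⟩
    exact ⟨⟨D, hD, Finset.inter_eq_left.mpr hsub⟩, hH.cluster_nonempty D hD⟩

lemma restrictT_restrictT {H : PTree} {Y Z : Finset ℕ} (h : Z ⊆ Y) :
    restrictT (restrictT H Y) Z = restrictT H Z := by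
  ext D
  simp only [mem_restrictT]
  constructor
  · rintro ⟨⟨C, ⟨⟨E, hE, rfl⟩, hCne⟩, rfl⟩, hne⟩
    refine ⟨⟨E, hE, ?_⟩, hne⟩
    rw [Finset.inter_assoc, Finset.inter_eq_right.mpr h]
  · rintro ⟨⟨E, hE, rfl⟩, hne⟩
    refine ⟨⟨E ∩ Y, ⟨⟨E, hE, rfl⟩, ?_⟩, ?_⟩, hne⟩
    · exact hne.mono (Finset.inter_subset_inter (le_refl _) h)
    · rw [Finset.inter_assoc, Finset.inter_eq_right.mpr h]

lemma restrictT_congr_inter {H : PTree} {A Y : Finset ℕ} (hsub : ∀ C ∈ H, C ⊆ A) :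
    restrictT H Y = restrictT H (A ∩ Y) := by
  ext D
  simp only [mem_restrictT]
  constructor
  · rintro ⟨⟨C, hC, rfl⟩, hne⟩
    refine ⟨⟨C, hC, ?_⟩, hne⟩
    rw [← Finset.inter_assoc, Finset.inter_eq_left.mpr (hsub C hC)]
  · rintro ⟨⟨C, hC, rfl⟩, hne⟩
    refine ⟨⟨C, hC, ?_⟩, hne⟩
    rw [← Finset.inter_assoc, Finset.inter_eq_left.mpr (hsub C hC)]

lemma restrictT_isHierarchy {X : Finset ℕ} {H : PTree} (hH : IsHierarchy X H)
    {Y : Finset ℕ} (hYX : Y ⊆ X) (hY : Y.Nonempty) : IsHierarchy Y (restrictT H Y) where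
  subset_top := by
    intro C hC
    rcases mem_restrictT.mp hC with ⟨⟨E, _, rfl⟩, _⟩
    exact Finset.inter_subset_right
  cluster_nonempty := by
    intro C hC
    exact (mem_restrictT.mp hC).2
  top_mem := by
    refine mem_restrictT.mpr ⟨⟨X, hH.top_mem, Finset.inter_eq_right.mpr hYX⟩, hY⟩
  singleton_mem := by
    intro x hx
    refine mem_restrictT.mpr ⟨⟨{x}, hH.singleton_mem x (hYX hx), ?_⟩, Finset.singleton_nonempty x⟩
    rw [Finset.inter_eq_left]
    simpa using hx
  laminar := by
    intro C hC D hD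
    rcases mem_restrictT.mp hC with ⟨⟨E, hE, rfl⟩, _⟩
    rcases mem_restrictT.mp hD with ⟨⟨F, hF, rfl⟩, _⟩
    rcases hH.laminar E hE F hF with h | h | h
    · left
      rw [← Finset.subset_empty, ← h]
      intro a ha
      simp only [Finset.mem_inter] at ha ⊢
      exact ⟨ha.1.1, ha.2.1⟩
    · right; left; exact Finset.inter_subset_inter h (le_refl _)
    · right; right; exact Finset.inter_subset_inter h (le_refl _)

lemma restrictT_singleton {X : Finset ℕ} {H : PTree} (hH : IsHierarchy X H)
    {y : ℕ} (hy : y ∈ X) : restrictT H {y} = {({y} : Finset ℕ)} := by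
  ext D
  simp only [mem_restrictT, Finset.mem_singleton]
  constructor
  · rintro ⟨⟨C, hC, rfl⟩, hne⟩
    have hsub : C ∩ {y} ⊆ {y} := Finset.inter_subset_right
    rcases Finset.subset_singleton_iff.mp hsub with h | h
    · rw [h] at hne; exact absurd hne (by simp)
    · exact h
  · rintro rfl
    exact ⟨⟨X, hH.top_mem, Finset.inter_eq_right.mpr (by simpa using hy)⟩, Finset.singleton_nonempty y⟩

/-- `π` is a partition of `X` into nonempty blocks. -/
def IsPart (X : Finset ℕ) (π : Finset (Finset ℕ)) : Prop :=
  (∀ A ∈ π, A.Nonempty ∧ A ⊆ X) ∧ (∀ x ∈ X, ∃ A ∈ π, x ∈ A) ∧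
  (∀ A ∈ π, ∀ B ∈ π, A ≠ B → A ∩ B = ∅)

lemma IsPart.eq_of_mem {X π} (h : IsPart X π) {A B : Finset ℕ} (hA : A ∈ π) (hB : B ∈ π)
    {x : ℕ} (hxA : x ∈ A) (hxB : x ∈ B) : A = B := by
  by_contra hne
  have := h.2.2 A hA B hB hne
  have : x ∈ A ∩ B := Finset.mem_inter.mpr ⟨hxA, hxB⟩
  rw [h.2.2 A hA B hB hne] at this
  exact absurd this (Finset.notMem_empty x)

lemma IsPart.biUnion_eq {X π} (h : IsPart X π) : π.biUnion id = X := by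
  ext x
  simp only [Finset.mem_biUnion, id]
  constructor
  · rintro ⟨A, hA, hx⟩; exact (h.1 A hA).2 hx
  · intro hx; exact h.2.1 x hx

lemma IsPart.sum_card {X π} (h : IsPart X π) : ∑ A ∈ π, A.card = X.card := by
  rw [← h.biUnion_eq, Finset.card_biUnion]
  · rfl
  intro A hA B hB hne
  show Disjoint A B
  rw [Finset.disjoint_iff_inter_eq_empty]
  exact h.2.2 A hA B hB hne

lemma IsPart.two_le_card {X π} (h : IsPart X π) (hX : X.Nonempty)
    (hprop : ∀ A ∈ π, A ≠ X) : 2 ≤ π.card := by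
  obtain ⟨x, hx⟩ := hX
  obtain ⟨A, hA, hxA⟩ := h.2.1 x hx
  have h1 : π.Nonempty := ⟨A, hA⟩
  rcases Nat.lt_or_ge π.card 2 with hlt | hge
  · exfalso
    interval_cases hc : π.card
    · rw [Finset.card_eq_zero] at hc; rw [hc] at hA; exact absurd hA (Finset.notMem_empty A)
    · obtain ⟨B, hB⟩ := Finset.card_eq_one.mp hc
      apply hprop A hA
      apply Finset.Subset.antisymm (h.1 A hA).2
      intro y hy
      obtain ⟨C, hC, hyC⟩ := h.2.1 y hy
      rw [hB, Finset.mem_singleton] at hA hC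
      rw [hA, ← hC]; exact hyC
  · exact hge

lemma mem_maxProper {X : Finset ℕ} {T : PTree} {C : Finset ℕ} :
    C ∈ maxProper X T ↔ C ∈ T ∧ C ≠ X ∧ ∀ D ∈ T, C ⊂ D → D = X := by
  simp [maxProper, Finset.mem_filter]

lemma maxProper_subset {X : Finset ℕ} {T : PTree} : maxProper X T ⊆ T :=
  Finset.filter_subset _ _

lemma maxProper_ssubset {X : Finset ℕ} {T : PTree} (hT : IsHierarchy X T)
    {M : Finset ℕ} (hM : M ∈ maxProper X T) : M ⊂ X := by
  rcases mem_maxProper.mp hM with ⟨hMT, hMX, _⟩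
  exact lt_of_le_of_ne (hT.subset_top M hMT) hMX

lemma exists_maxProper_superset {X : Finset ℕ} {H : PTree} (hH : IsHierarchy X H)
    {C : Finset ℕ} (hC : C ∈ H) (hCX : C ≠ X) : ∃ M ∈ maxProper X H, C ⊆ M := by
  classical
  have hne : (H.filter (fun D => C ⊆ D ∧ D ≠ X)).Nonempty :=
    ⟨C, by simp [hC, hCX]⟩
  obtain ⟨M, hM, hmax⟩ := Finset.exists_max_image _ (fun D => D.card) hne
  simp only [Finset.mem_filter] at hM
  obtain ⟨hMH, hCM, hMX⟩ := hM
  refine ⟨M, mem_maxProper.mpr ⟨hMH, hMX, ?_⟩, hCM⟩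
  intro D hD hMD
  by_contra hDX
  have hDmem : D ∈ H.filter (fun D => C ⊆ D ∧ D ≠ X) := by
    simp only [Finset.mem_filter]
    exact ⟨hD, hCM.trans hMD.subset, hDX⟩
  have := hmax D hDmem
  exact absurd (Finset.card_lt_card hMD) (not_lt.mpr this)

lemma maxProper_isPart {X : Finset ℕ} {H : PTree} (hH : IsHierarchy X H)
    (h2 : 2 ≤ X.card) : IsPart X (maxProper X H) := by
  refine ⟨?_, ?_, ?_⟩
  · intro A hA
    exact ⟨hH.cluster_nonempty A (maxProper_subset hA),
      hH.subset_top A (maxProper_subset hA)⟩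
  · intro x hx
    have hs : ({x} : Finset ℕ) ∈ H := hH.singleton_mem x hx
    have hsX : ({x} : Finset ℕ) ≠ X := by
      intro h
      rw [← h] at h2
      simp at h2
    obtain ⟨M, hM, hsub⟩ := exists_maxProper_superset hH hs hsX
    exact ⟨M, hM, hsub (Finset.mem_singleton_self x)⟩
  · intro A hA B hB hne
    rcases mem_maxProper.mp hA with ⟨hAT, hAX, hAmax⟩
    rcases mem_maxProper.mp hB with ⟨hBT, hBX, hBmax⟩
    rcases hH.laminar A hAT B hBT with h | h | h
    · exact h
    · exact absurd (hAmax B hBT (lt_of_le_of_ne h hne)) hBX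
    · exact absurd (hBmax A hAT (lt_of_le_of_ne h (Ne.symm hne))) hAX

lemma filter_subset_isHierarchy {X : Finset ℕ} {H : PTree} (hH : IsHierarchy X H)
    {A : Finset ℕ} (hA : A ∈ H) : IsHierarchy A (H.filter (· ⊆ A)) where
  subset_top := by intro C hC; exact (Finset.mem_filter.mp hC).2
  cluster_nonempty := by
    intro C hC; exact hH.cluster_nonempty C (Finset.mem_filter.mp hC).1
  top_mem := Finset.mem_filter.mpr ⟨hA, le_refl _⟩
  singleton_mem := by
    intro x hx
    refine Finset.mem_filter.mpr ⟨hH.singleton_mem x (hH.subset_top A hA hx), by simpa using hx⟩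
  laminar := by
    intro C hC D hD
    exact hH.laminar C (Finset.mem_filter.mp hC).1 D (Finset.mem_filter.mp hD).1

/-- Decomposition of a hierarchy at the root. -/
lemma hierarchy_decomp {X : Finset ℕ} {H : PTree} (hH : IsHierarchy X H) :
    H = insert X ((maxProper X H).biUnion (fun A => H.filter (· ⊆ A))) := by
  ext C
  simp only [Finset.mem_insert, Finset.mem_biUnion, Finset.mem_filter]
  constructor
  · intro hC
    by_cases hCX : C = X
    · exact Or.inl hCX
    · obtain ⟨M, hM, hsub⟩ := exists_maxProper_superset hH hC hCX
      exact Or.inr ⟨M, hM, hC, hsub⟩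
  · rintro (rfl | ⟨M, _, hC, _⟩)
    · exact hH.top_mem
    · exact hC

lemma mem_meet2 {π π' : Finset (Finset ℕ)} {B : Finset ℕ} :
    B ∈ meet2 π π' ↔ (∃ p ∈ π, ∃ q ∈ π', p ∩ q = B) ∧ B.Nonempty := by
  simp [meet2, Finset.mem_filter, Finset.mem_image, Finset.mem_product]
  aesop

lemma meet2_isPart {X : Finset ℕ} {π π' : Finset (Finset ℕ)}
    (h : IsPart X π) (h' : IsPart X π') : IsPart X (meet2 π π') := by
  refine ⟨?_, ?_, ?_⟩
  · intro A hA
    rcases mem_meet2.mp hA with ⟨⟨p, hp, q, hq, rfl⟩, hne⟩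
    exact ⟨hne, Finset.inter_subset_left.trans (h.1 p hp).2⟩
  · intro x hx
    obtain ⟨p, hp, hxp⟩ := h.2.1 x hx
    obtain ⟨q, hq, hxq⟩ := h'.2.1 x hx
    refine ⟨p ∩ q, mem_meet2.mpr ⟨⟨p, hp, q, hq, rfl⟩, ⟨x, Finset.mem_inter.mpr ⟨hxp, hxq⟩⟩⟩,
      Finset.mem_inter.mpr ⟨hxp, hxq⟩⟩
  · intro A hA B hB hne
    rcases mem_meet2.mp hA with ⟨⟨p, hp, q, hq, rfl⟩, _⟩
    rcases mem_meet2.mp hB with ⟨⟨p', hp', q', hq', rfl⟩, _⟩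
    by_contra hemp
    obtain ⟨x, hx⟩ := Finset.nonempty_iff_ne_empty.mpr hemp
    simp only [Finset.mem_inter] at hx
    have hpp : p = p' := h.eq_of_mem hp hp' hx.1.1 hx.2.1
    have hqq : q = q' := h'.eq_of_mem hq hq' hx.1.2 hx.2.2
    exact hne (by rw [hpp, hqq])

lemma foldl_meet2_isPart {X : Finset ℕ} :
    ∀ (L : List (Finset (Finset ℕ))) (acc : Finset (Finset ℕ)), IsPart X acc →
      (∀ π ∈ L, IsPart X π) → IsPart X (L.foldl meet2 acc) := by
  intro L
  induction L with
  | nil => intro acc h _; exact h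
  | cons π L ih =>
    intro acc hacc hall
    exact ih (meet2 acc π) (meet2_isPart hacc (hall π (List.mem_cons_self)))
      (fun π' hπ' => hall π' (List.mem_cons_of_mem π hπ'))

lemma foldl_meet2_closed (p : Finset ℕ → Prop)
    (hp : ∀ A B, p A → p B → (A ∩ B).Nonempty → p (A ∩ B)) :
    ∀ (L : List (Finset (Finset ℕ))) (acc : Finset (Finset ℕ)),
      (∀ A ∈ acc, p A) → (∀ π ∈ L, ∀ M ∈ π, p M) →
      ∀ A ∈ L.foldl meet2 acc, p A := by
  intro L
  induction L with
  | nil => intro acc hacc _ A hA; exact hacc A hA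
  | cons π L ih =>
    intro acc hacc hall A hA
    refine ih (meet2 acc π) ?_ (fun π' hπ' => hall π' (List.mem_cons_of_mem π hπ')) A hA
    intro B hB
    rcases mem_meet2.mp hB with ⟨⟨a, ha, m, hm, rfl⟩, hne⟩
    exact hp a m (hacc a ha) (hall π (List.mem_cons_self) m hm) hne

lemma foldl_meet2_refines :
    ∀ (L : List (Finset (Finset ℕ))) (acc : Finset (Finset ℕ)),
      ∀ A ∈ L.foldl meet2 acc, (∃ a ∈ acc, A ⊆ a) ∧ (∀ π ∈ L, ∃ M ∈ π, A ⊆ M) := by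
  intro L
  induction L with
  | nil =>
    intro acc A hA
    exact ⟨⟨A, hA, le_refl _⟩, by simp⟩
  | cons π L ih =>
    intro acc A hA
    obtain ⟨⟨b, hb, hAb⟩, hrest⟩ := ih (meet2 acc π) A hA
    rcases mem_meet2.mp hb with ⟨⟨a, ha, m, hm, rfl⟩, _⟩
    refine ⟨⟨a, ha, hAb.trans Finset.inter_subset_left⟩, ?_⟩
    intro π' hπ'
    rcases List.mem_cons.mp hπ' with rfl | hπ'
    · exact ⟨m, hm, hAb.trans Finset.inter_subset_right⟩
    · exact hrest π' hπ'

/-- The top blocks used by `adamsAux`. -/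
def blocksOf (X : Finset ℕ) (P : List PTree) : Finset (Finset ℕ) :=
  (meetAll (P.map (maxProper X))).filter (fun A => A ⊂ X)

lemma adamsAux_fuel : ∀ (n m : ℕ) (X : Finset ℕ) (P : List PTree),
    X.card ≤ n → X.card ≤ m → adamsAux n X P = adamsAux m X P := by
  intro n
  induction n with
  | zero =>
    intro m X P hn _
    have hX : X = ∅ := Finset.card_eq_zero.mp (Nat.le_zero.mp hn)
    subst hX
    cases m with
    | zero => rfl
    | succ m =>
      show _ = insert ∅ (Finset.biUnion _ _)
      have : (meetAll (P.map (maxProper ∅))).filter (fun A => A ⊂ (∅ : Finset ℕ)) = ∅ := by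
        apply Finset.filter_eq_empty_iff.mpr
        intro A _
        exact fun h => absurd h (Finset.not_ssubset_empty A)
      rw [this]
      simp [adamsAux]
  | succ n ih =>
    intro m X P hn hm
    cases m with
    | zero =>
      have hX : X = ∅ := Finset.card_eq_zero.mp (Nat.le_zero.mp hm)
      subst hX
      show insert ∅ (Finset.biUnion _ _) = _
      have : (meetAll (P.map (maxProper ∅))).filter (fun A => A ⊂ (∅ : Finset ℕ)) = ∅ := by
        apply Finset.filter_eq_empty_iff.mpr
        intro A _
        exact fun h => absurd h (Finset.not_ssubset_empty A)
      rw [this]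
      simp [adamsAux]
    | succ m =>
      show insert X (Finset.biUnion _ _) = insert X (Finset.biUnion _ _)
      congr 1
      apply Finset.biUnion_congr rfl
      intro A hA
      have hAX : A ⊂ X := (Finset.mem_filter.mp hA).2
      have hcard : A.card < X.card := Finset.card_lt_card hAX
      exact ih m A (P.map (fun T => restrictT T A)) (by omega) (by omega)

lemma adams_unfold {X : Finset ℕ} (hX : X.Nonempty) (P : List PTree) :
    adams X P = insert X ((blocksOf X P).biUnion
      (fun A => adams A (P.map (fun T => restrictT T A)))) := by
  have h1 : 1 ≤ X.card := Finset.card_pos.mpr hX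
  obtain ⟨k, hk⟩ : ∃ k, X.card = k + 1 := ⟨X.card - 1, by omega⟩
  unfold adams
  rw [hk]
  show insert X (Finset.biUnion _ _) = _
  congr 1
  apply Finset.biUnion_congr rfl
  intro A hA
  have hAX : A ⊂ X := (Finset.mem_filter.mp hA).2
  have hcard : A.card < X.card := Finset.card_lt_card hAX
  exact adamsAux_fuel k A.card A (P.map (fun T => restrictT T A)) (by omega) (le_refl _)

lemma blocksOf_closed {X : Finset ℕ} {P : List PTree} (p : Finset ℕ → Prop)
    (hp : ∀ A B, p A → p B → (A ∩ B).Nonempty → p (A ∩ B))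
    (hall : ∀ T ∈ P, ∀ M ∈ maxProper X T, p M) :
    ∀ A ∈ blocksOf X P, p A := by
  intro A hA
  have hA' : A ∈ meetAll (P.map (maxProper X)) := (Finset.mem_filter.mp hA).1
  cases P with
  | nil => simp [meetAll] at hA'
  | cons T P' =>
    have : (T :: P').map (maxProper X) = maxProper X T :: P'.map (maxProper X) := rfl
    rw [this] at hA'
    refine foldl_meet2_closed p hp _ _ ?_ ?_ A hA'
    · exact hall T (List.mem_cons_self)
    · intro π hπ M hM
      obtain ⟨S, hS, rfl⟩ := List.mem_map.mp hπ
      exact hall S (List.mem_cons_of_mem T hS) M hM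

lemma blocksOf_nonempty {X : Finset ℕ} {P : List PTree}
    (hh : ∀ T ∈ P, IsHierarchy X T) : ∀ A ∈ blocksOf X P, A.Nonempty := by
  apply blocksOf_closed
  · intro A B _ _ h; exact h
  · intro T hT M hM
    exact (hh T hT).cluster_nonempty M (maxProper_subset hM)

lemma blocksOf_spec {X : Finset ℕ} {P : List PTree} (hP : P ≠ [])
    (hh : ∀ T ∈ P, IsHierarchy X T) (h2 : 2 ≤ X.card) :
    IsPart X (blocksOf X P) ∧
      ∀ A ∈ blocksOf X P, ∀ T ∈ P, ∃ M ∈ maxProper X T, A ⊆ M := by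
  cases P with
  | nil => exact absurd rfl hP
  | cons T P' =>
    have hmap : (T :: P').map (maxProper X) = maxProper X T :: P'.map (maxProper X) := rfl
    have hmeet : meetAll ((T :: P').map (maxProper X))
        = (P'.map (maxProper X)).foldl meet2 (maxProper X T) := by
      rw [hmap]; rfl
    have hpartAll : IsPart X (meetAll ((T :: P').map (maxProper X))) := by
      rw [hmeet]
      refine foldl_meet2_isPart _ _ (maxProper_isPart (hh T (List.mem_cons_self)) h2) ?_
      intro π hπ
      obtain ⟨S, hS, rfl⟩ := List.mem_map.mp hπ
      exact maxProper_isPart (hh S (List.mem_cons_of_mem T hS)) h2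
    have hrefine : ∀ A ∈ meetAll ((T :: P').map (maxProper X)),
        ∀ S ∈ (T :: P'), ∃ M ∈ maxProper X S, A ⊆ M := by
      intro A hA S hS
      rw [hmeet] at hA
      obtain ⟨⟨a, ha, hAa⟩, hrest⟩ := foldl_meet2_refines _ _ A hA
      rcases List.mem_cons.mp hS with rfl | hS'
      · exact ⟨a, ha, hAa⟩
      · obtain ⟨M, hM, hAM⟩ := hrest (maxProper X S) (List.mem_map.mpr ⟨S, hS', rfl⟩)
        exact ⟨M, hM, hAM⟩
    have hfilter : blocksOf X (T :: P') = meetAll ((T :: P').map (maxProper X)) := by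
      apply Finset.filter_eq_self.mpr
      intro A hA
      obtain ⟨M, hM, hAM⟩ := hrefine A hA T (List.mem_cons_self)
      exact lt_of_le_of_lt hAM (maxProper_ssubset (hh T (List.mem_cons_self)) hM)
    constructor
    · rw [hfilter]; exact hpartAll
    · intro A hA S hS
      rw [hfilter] at hA
      exact hrefine A hA S hS

lemma adams_singleton {X : Finset ℕ} {P : List PTree} (h1 : X.card = 1)
    (hh : ∀ T ∈ P, IsHierarchy X T) : adams X P = {X} := by
  have hX : X.Nonempty := Finset.card_pos.mp (by omega)
  have hblocks : blocksOf X P = ∅ := by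
    rw [Finset.eq_empty_iff_forall_notMem]
    intro A hA
    have hne : A.Nonempty := blocksOf_nonempty hh A hA
    have hAX : A ⊂ X := (Finset.mem_filter.mp hA).2
    have : A.card < X.card := Finset.card_lt_card hAX
    have : 1 ≤ A.card := Finset.card_pos.mpr hne
    omega
  rw [adams_unfold hX, hblocks]
  simp

lemma hierarchy_singleton {X : Finset ℕ} {T : PTree} (h1 : X.card = 1)
    (hT : IsHierarchy X T) : T = {X} := by
  ext C
  simp only [Finset.mem_singleton]
  constructor
  · intro hC
    obtain ⟨x, hx⟩ := Finset.card_eq_one.mp h1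
    subst hx
    rcases Finset.subset_singleton_iff.mp (hT.subset_top C hC) with h | h
    · rw [h] at hC
      exact absurd (hT.cluster_nonempty _ hC) (by simp)
    · exact h
  · rintro rfl; exact hT.top_mem

lemma adams_isHierarchy (n : ℕ) : ∀ (X : Finset ℕ), X.card ≤ n → ∀ (P : List PTree),
    P ≠ [] → (∀ T ∈ P, IsHierarchy X T) → X.Nonempty → IsHierarchy X (adams X P) := by
  induction n with
  | zero =>
    intro X hX _ _ _ hne
    exact absurd (Finset.card_pos.mpr hne) (by omega)
  | succ n ih =>
    intro X hXn P hP hh hX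
    rcases Nat.lt_or_ge X.card 2 with h1 | h2
    · -- X.card = 1
      have h1' : X.card = 1 := by
        have := Finset.card_pos.mpr hX; omega
      rw [adams_singleton h1' hh]
      obtain ⟨x, hx⟩ := Finset.card_eq_one.mp h1'
      subst hx
      exact { subset_top := by simp
              cluster_nonempty := by simp
              top_mem := by simp
              singleton_mem := by simp +contextual
              laminar := by simp [Nested] }
    · obtain ⟨hpart, _⟩ := blocksOf_spec hP hh h2
      have hsub : ∀ A ∈ blocksOf X P,
          IsHierarchy A (adams A (P.map (fun T => restrictT T A))) := by
        intro A hA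
        have hAne : A.Nonempty := (hpart.1 A hA).1
        have hAX : A ⊆ X := (hpart.1 A hA).2
        have hAcard : A.card < X.card := Finset.card_lt_card (Finset.mem_filter.mp hA).2
        refine ih A (by omega) _ (by simp [hP]) ?_ hAne
        intro S hS
        obtain ⟨T, hT, rfl⟩ := List.mem_map.mp hS
        exact restrictT_isHierarchy (hh T hT) hAX hAne
      rw [adams_unfold hX]
      refine { subset_top := ?_, cluster_nonempty := ?_, top_mem := ?_,
               singleton_mem := ?_, laminar := ?_ }
      · intro C hC
        rcases Finset.mem_insert.mp hC with rfl | hC'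
        · exact Finset.Subset.refl _
        · obtain ⟨A, hA, hCA⟩ := Finset.mem_biUnion.mp hC'
          exact ((hsub A hA).subset_top C hCA).trans (hpart.1 A hA).2
      · intro C hC
        rcases Finset.mem_insert.mp hC with rfl | hC'
        · exact hX
        · obtain ⟨A, hA, hCA⟩ := Finset.mem_biUnion.mp hC'
          exact (hsub A hA).cluster_nonempty C hCA
      · exact Finset.mem_insert_self X _
      · intro x hx
        obtain ⟨A, hA, hxA⟩ := hpart.2.1 x hx
        refine Finset.mem_insert_of_mem (Finset.mem_biUnion.mpr ⟨A, hA, ?_⟩)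
        exact (hsub A hA).singleton_mem x hxA
      · intro C hC D hD
        rcases Finset.mem_insert.mp hC with rfl | hC'
        · rcases Finset.mem_insert.mp hD with rfl | hD'
          · right; left; exact Finset.Subset.refl _
          · obtain ⟨A, hA, hDA⟩ := Finset.mem_biUnion.mp hD'
            right; right
            exact ((hsub A hA).subset_top D hDA).trans (hpart.1 A hA).2
        · obtain ⟨A, hA, hCA⟩ := Finset.mem_biUnion.mp hC'
          rcases Finset.mem_insert.mp hD with rfl | hD'
          · right; left
            exact ((hsub A hA).subset_top C hCA).trans (hpart.1 A hA).2
          · obtain ⟨A', hA', hDA'⟩ := Finset.mem_biUnion.mp hD'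
            by_cases hAA : A = A'
            · subst hAA
              exact (hsub A hA).laminar C hCA D hDA'
            · left
              have hCsub := (hsub A hA).subset_top C hCA
              have hDsub := (hsub A' hA').subset_top D hDA'
              have := hpart.2.2 A hA A' hA' hAA
              rw [← Finset.subset_empty, ← this]
              exact Finset.inter_subset_inter hCsub hDsub

lemma maxProper_disjoint {X : Finset ℕ} {H : PTree} (hH : IsHierarchy X H)
    {A B : Finset ℕ} (hA : A ∈ maxProper X H) (hB : B ∈ maxProper X H) (hne : A ≠ B) :
    A ∩ B = ∅ := by
  rcases mem_maxProper.mp hA with ⟨hAT, hAX, hAmax⟩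
  rcases mem_maxProper.mp hB with ⟨hBT, hBX, hBmax⟩
  rcases hH.laminar A hAT B hBT with h | h | h
  · exact h
  · exact absurd (hAmax B hBT (lt_of_le_of_ne h hne)) hBX
  · exact absurd (hBmax A hAT (lt_of_le_of_ne h (Ne.symm hne))) hAX

lemma hierarchy_card_decomp {X : Finset ℕ} {H : PTree} (hH : IsHierarchy X H) :
    H.card = 1 + ∑ A ∈ maxProper X H, (H.filter (· ⊆ A)).card := by
  have hnot : X ∉ (maxProper X H).biUnion (fun A => H.filter (· ⊆ A)) := by
    intro hX
    obtain ⟨A, hA, hXA⟩ := Finset.mem_biUnion.mp hX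
    have hsub : X ⊆ A := (Finset.mem_filter.mp hXA).2
    rcases mem_maxProper.mp hA with ⟨hAT, hAX, _⟩
    exact hAX (Finset.Subset.antisymm (hH.subset_top A hAT) hsub)
  have hdisj : ∀ A ∈ maxProper X H, ∀ B ∈ maxProper X H, A ≠ B →
      Disjoint (H.filter (· ⊆ A)) (H.filter (· ⊆ B)) := by
    intro A hA B hB hne
    rw [Finset.disjoint_left]
    intro C hCA hCB
    have h1 : C ⊆ A := (Finset.mem_filter.mp hCA).2
    have h2 : C ⊆ B := (Finset.mem_filter.mp hCB).2
    have hCne := hH.cluster_nonempty C (Finset.mem_filter.mp hCA).1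
    obtain ⟨x, hx⟩ := hCne
    have : x ∈ A ∩ B := Finset.mem_inter.mpr ⟨h1 hx, h2 hx⟩
    rw [maxProper_disjoint hH hA hB hne] at this
    exact absurd this (Finset.notMem_empty x)
  conv_lhs => rw [hierarchy_decomp hH]
  rw [Finset.card_insert_of_notMem hnot, Finset.card_biUnion hdisj]
  omega

lemma hierarchy_card_le (n : ℕ) : ∀ (X : Finset ℕ), X.card ≤ n → ∀ (H : PTree),
    IsHierarchy X H → H.card + 1 ≤ 2 * X.card := by
  induction n with
  | zero =>
    intro X hX H hH
    have hXempty : X = ∅ := Finset.card_eq_zero.mp (Nat.le_zero.mp hX)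
    subst hXempty
    exact absurd (hH.cluster_nonempty ∅ hH.top_mem) (by simp)
  | succ n ih =>
    intro X hXn H hH
    have hXne : X.Nonempty := by
      by_contra h
      rw [Finset.not_nonempty_iff_eq_empty] at h
      subst h
      exact absurd (hH.cluster_nonempty ∅ hH.top_mem) (by simp)
    rcases Nat.lt_or_ge X.card 2 with h1 | h2
    · have h1' : X.card = 1 := by have := Finset.card_pos.mpr hXne; omega
      rw [hierarchy_singleton h1' hH, h1']
      simp
    · have hpart := maxProper_isPart hH h2
      have hk := hpart.two_le_card hXne (fun A hA => (mem_maxProper.mp hA).2.1)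
      have hsum := hpart.sum_card
      have hterm : ∀ A ∈ maxProper X H, (H.filter (· ⊆ A)).card + 1 ≤ 2 * A.card := by
        intro A hA
        have hAX : A ⊂ X := maxProper_ssubset hH hA
        have : A.card < X.card := Finset.card_lt_card hAX
        exact ih A (by omega) _ (filter_subset_isHierarchy hH (maxProper_subset hA))
      have hsumle : ∑ A ∈ maxProper X H, ((H.filter (· ⊆ A)).card + 1)
          ≤ ∑ A ∈ maxProper X H, 2 * A.card := Finset.sum_le_sum hterm
      rw [Finset.sum_add_distrib, ← Finset.mul_sum, hsum] at hsumle
      simp only [Finset.sum_const, smul_eq_mul, mul_one] at hsumle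
      have hdecomp := hierarchy_card_decomp hH
      omega

lemma adams_sub_isHierarchy {X : Finset ℕ} {P : List PTree} (hP : P ≠ [])
    (hh : ∀ T ∈ P, IsHierarchy X T) {A : Finset ℕ} (hAne : A.Nonempty) (hAX : A ⊆ X) :
    IsHierarchy A (adams A (P.map (fun T => restrictT T A))) := by
  refine adams_isHierarchy A.card A (le_refl _) _ (by simp [hP]) ?_ hAne
  intro S hS
  obtain ⟨T, hT, rfl⟩ := List.mem_map.mp hS
  exact restrictT_isHierarchy (hh T hT) hAX hAne

lemma adams_card_decomp {X : Finset ℕ} {P : List PTree} (hP : P ≠ [])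
    (hh : ∀ T ∈ P, IsHierarchy X T) (h2 : 2 ≤ X.card) :
    (adams X P).card = 1 + ∑ A ∈ blocksOf X P,
      (adams A (P.map (fun T => restrictT T A))).card := by
  have hXne : X.Nonempty := Finset.card_pos.mp (by omega)
  obtain ⟨hpart, _⟩ := blocksOf_spec hP hh h2
  have hsub : ∀ A ∈ blocksOf X P,
      IsHierarchy A (adams A (P.map (fun T => restrictT T A))) := by
    intro A hA
    exact adams_sub_isHierarchy hP hh (hpart.1 A hA).1 (hpart.1 A hA).2
  have hnot : X ∉ (blocksOf X P).biUnion
      (fun A => adams A (P.map (fun T => restrictT T A))) := by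
    intro hX
    obtain ⟨A, hA, hXA⟩ := Finset.mem_biUnion.mp hX
    have h1 : X ⊆ A := (hsub A hA).subset_top X hXA
    have h2' : A ⊂ X := (Finset.mem_filter.mp hA).2
    exact (h2'.not_subset) h1
  have hdisj : ∀ A ∈ blocksOf X P, ∀ B ∈ blocksOf X P, A ≠ B →
      Disjoint (adams A (P.map (fun T => restrictT T A)))
        (adams B (P.map (fun T => restrictT T B))) := by
    intro A hA B hB hne
    rw [Finset.disjoint_left]
    intro C hCA hCB
    obtain ⟨x, hx⟩ := (hsub A hA).cluster_nonempty C hCA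
    have hxA : x ∈ A := (hsub A hA).subset_top C hCA hx
    have hxB : x ∈ B := (hsub B hB).subset_top C hCB hx
    exact hne (hpart.eq_of_mem hA hB hxA hxB)
  rw [adams_unfold hXne, Finset.card_insert_of_notMem hnot, Finset.card_biUnion hdisj]
  omega

lemma adams_binary_inputs_eq (n : ℕ) : ∀ (X : Finset ℕ), X.card ≤ n → ∀ (P : List PTree),
    P ≠ [] → (∀ T ∈ P, IsHierarchy X T) → X.Nonempty →
    (adams X P).card + 1 = 2 * X.card → ∀ T ∈ P, T = adams X P := by
  induction n with
  | zero =>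
    intro X hX _ _ _ hne _
    exact absurd (Finset.card_pos.mpr hne) (by omega)
  | succ n ih =>
    intro X hXn P hP hh hXne hbin T hT
    rcases Nat.lt_or_ge X.card 2 with h1 | h2
    · have h1' : X.card = 1 := by have := Finset.card_pos.mpr hXne; omega
      rw [adams_singleton h1' hh]
      exact hierarchy_singleton h1' (hh T hT)
    · obtain ⟨hpart, hrefine⟩ := blocksOf_spec hP hh h2
      have hk : 2 ≤ (blocksOf X P).card :=
        hpart.two_le_card hXne (fun A hA => (Finset.mem_filter.mp hA).2.ne)
      have hdecomp := adams_card_decomp hP hh h2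
      have hterm : ∀ A ∈ blocksOf X P,
          (adams A (P.map (fun T => restrictT T A))).card + 1 ≤ 2 * A.card := by
        intro A hA
        exact hierarchy_card_le A.card A (le_refl _) _
          (adams_sub_isHierarchy hP hh (hpart.1 A hA).1 (hpart.1 A hA).2)
      have hsum := hpart.sum_card
      have hsumle : ∑ A ∈ blocksOf X P,
          ((adams A (P.map (fun T => restrictT T A))).card + 1)
          ≤ ∑ A ∈ blocksOf X P, 2 * A.card := Finset.sum_le_sum hterm
      rw [Finset.sum_add_distrib, ← Finset.mul_sum, hsum] at hsumle
      simp only [Finset.sum_const, smul_eq_mul, mul_one] at hsumle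
      have hk2 : (blocksOf X P).card = 2 := by omega
      obtain ⟨A1, A2, hA12, hblocks⟩ := Finset.card_eq_two.mp hk2
      have hA1mem : A1 ∈ blocksOf X P := by rw [hblocks]; simp
      have hA2mem : A2 ∈ blocksOf X P := by rw [hblocks]; simp
      -- per-block binary
      have hsum2 : A1.card + A2.card = X.card := by
        rw [hblocks, Finset.sum_pair hA12] at hsum; exact hsum
      have hdecomp2 : (adams X P).card = 1 +
          ((adams A1 (P.map (fun T => restrictT T A1))).card
           + (adams A2 (P.map (fun T => restrictT T A2))).card) := by
        rw [hdecomp, hblocks, Finset.sum_pair hA12]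
      have ht1 := hterm A1 hA1mem
      have ht2 := hterm A2 hA2mem
      have hb1 : (adams A1 (P.map (fun T => restrictT T A1))).card + 1 = 2 * A1.card := by
        omega
      have hb2 : (adams A2 (P.map (fun T => restrictT T A2))).card + 1 = 2 * A2.card := by
        omega
      -- apply IH on each block
      have hcard1 : A1.card < X.card := Finset.card_lt_card (Finset.mem_filter.mp hA1mem).2
      have hcard2 : A2.card < X.card := Finset.card_lt_card (Finset.mem_filter.mp hA2mem).2
      have hhyps : ∀ (A : Finset ℕ), A ∈ blocksOf X P →
          ∀ S ∈ P.map (fun T => restrictT T A), IsHierarchy A S := by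
        intro A hA S hS
        obtain ⟨T', hT', rfl⟩ := List.mem_map.mp hS
        exact restrictT_isHierarchy (hh T' hT') (hpart.1 A hA).2 (hpart.1 A hA).1
      have hIH1 : restrictT T A1 = adams A1 (P.map (fun T => restrictT T A1)) :=
        ih A1 (by omega) _ (by simp [hP]) (hhyps A1 hA1mem) (hpart.1 A1 hA1mem).1 hb1
          (restrictT T A1) (List.mem_map.mpr ⟨T, hT, rfl⟩)
      have hIH2 : restrictT T A2 = adams A2 (P.map (fun T => restrictT T A2)) :=
        ih A2 (by omega) _ (by simp [hP]) (hhyps A2 hA2mem) (hpart.1 A2 hA2mem).1 hb2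
          (restrictT T A2) (List.mem_map.mpr ⟨T, hT, rfl⟩)
      -- X = A1 ∪ A2
      have hcover : ∀ x ∈ X, x ∈ A1 ∨ x ∈ A2 := by
        intro x hx
        obtain ⟨A, hA, hxA⟩ := hpart.2.1 x hx
        rw [hblocks, Finset.mem_insert, Finset.mem_singleton] at hA
        rcases hA with rfl | rfl
        · exact Or.inl hxA
        · exact Or.inr hxA
      have hT' := hh T hT
      -- every maximal proper cluster of T is A1 or A2
      have hblocksub : ∀ A ∈ blocksOf X P, ∀ M ∈ maxProper X T,
          (A ∩ M).Nonempty → A ⊆ M := by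
        intro A hA M hM hne
        obtain ⟨M', hM', hAM'⟩ := hrefine A hA T hT
        obtain ⟨y, hy⟩ := hne
        rw [Finset.mem_inter] at hy
        have : M' = M := by
          by_contra hMM
          have := maxProper_disjoint hT' hM' hM hMM
          have hy' : y ∈ M' ∩ M := Finset.mem_inter.mpr ⟨hAM' hy.1, hy.2⟩
          rw [this] at hy'
          exact absurd hy' (Finset.notMem_empty y)
        rw [← this]; exact hAM'
      have hkey : ∀ M ∈ maxProper X T, M = A1 ∨ M = A2 := by
        intro M hM
        have hMne := hT'.cluster_nonempty M (maxProper_subset hM)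
        have hMX : M ⊆ X := hT'.subset_top M (maxProper_subset hM)
        have hMneX : M ≠ X := (mem_maxProper.mp hM).2.1
        by_cases hi1 : (A1 ∩ M).Nonempty <;> by_cases hi2 : (A2 ∩ M).Nonempty
        · exfalso
          have hs1 := hblocksub A1 hA1mem M hM hi1
          have hs2 := hblocksub A2 hA2mem M hM hi2
          apply hMneX
          apply Finset.Subset.antisymm hMX
          intro x hx
          rcases hcover x hx with h | h
          · exact hs1 h
          · exact hs2 h
        · left
          apply Finset.Subset.antisymm
          · intro x hx
            rcases hcover x (hMX hx) with h | h
            · exact h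
            · exact absurd ⟨x, Finset.mem_inter.mpr ⟨h, hx⟩⟩ hi2
          · exact hblocksub A1 hA1mem M hM hi1
        · right
          apply Finset.Subset.antisymm
          · intro x hx
            rcases hcover x (hMX hx) with h | h
            · exact absurd ⟨x, Finset.mem_inter.mpr ⟨h, hx⟩⟩ hi1
            · exact h
          · exact hblocksub A2 hA2mem M hM hi2
        · exfalso
          obtain ⟨x, hx⟩ := hMne
          rcases hcover x (hMX hx) with h | h
          · exact hi1 ⟨x, Finset.mem_inter.mpr ⟨h, hx⟩⟩
          · exact hi2 ⟨x, Finset.mem_inter.mpr ⟨h, hx⟩⟩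
      have hmaxT : maxProper X T = {A1, A2} := by
        have hmp := maxProper_isPart hT' h2
        apply Finset.Subset.antisymm
        · intro M hM
          rcases hkey M hM with rfl | rfl
          · simp
          · simp
        · have hmemi : ∀ A, A ∈ blocksOf X P → A ∈ maxProper X T := by
            intro A hA
            obtain ⟨x, hx⟩ := (hpart.1 A hA).1
            obtain ⟨M, hM, hxM⟩ := hmp.2.1 x ((hpart.1 A hA).2 hx)
            have hAsub : A ⊆ M := hblocksub A hA M hM ⟨x, Finset.mem_inter.mpr ⟨hx, hxM⟩⟩
            have hMblocks : M ∈ blocksOf X P := by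
              rw [hblocks]
              rcases hkey M hM with h | h <;> simp [h]
            have hAM : A = M := hpart.eq_of_mem hA hMblocks hx (hAsub hx)
            rw [hAM]
            exact hM
          intro A hA
          apply hmemi
          rw [hblocks]; exact hA
      -- decompose T and adams and compare
      have hA1T : A1 ∈ T := maxProper_subset (by rw [hmaxT]; simp)
      have hA2T : A2 ∈ T := maxProper_subset (by rw [hmaxT]; simp)
      have hTdec := hierarchy_decomp hT'
      rw [hmaxT] at hTdec
      rw [adams_unfold hXne, hblocks]
      rw [hTdec]
      congr 1
      rw [Finset.biUnion_insert, Finset.singleton_biUnion,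
        Finset.biUnion_insert, Finset.singleton_biUnion]
      rw [← restrictT_eq_filter hT' hA1T, ← restrictT_eq_filter hT' hA2T, hIH1, hIH2]

lemma maxProper_restrict_trace {X Y : Finset ℕ} {T : PTree} (hT : IsHierarchy X T)
    (hYX : Y ⊆ X) {M : Finset ℕ} (hM : M ∈ maxProper X T)
    (hne : (M ∩ Y).Nonempty) (hMY : M ∩ Y ≠ Y) :
    M ∩ Y ∈ maxProper Y (restrictT T Y) := by
  rcases mem_maxProper.mp hM with ⟨hMT, hMX, hMmax⟩
  refine mem_maxProper.mpr ⟨mem_restrictT.mpr ⟨⟨M, hMT, rfl⟩, hne⟩, hMY, ?_⟩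
  intro D' hD' hssub
  rcases mem_restrictT.mp hD' with ⟨⟨D, hD, rfl⟩, hDne⟩
  have hMD : (M ∩ D).Nonempty := by
    obtain ⟨x, hx⟩ := hne
    rw [Finset.mem_inter] at hx
    have hxD : x ∈ D ∩ Y := hssub.subset (Finset.mem_inter.mpr ⟨hx.1, hx.2⟩)
    rw [Finset.mem_inter] at hxD
    exact ⟨x, Finset.mem_inter.mpr ⟨hx.1, hxD.1⟩⟩
  rcases hT.laminar M hMT D hD with h | h | h
  · rw [h] at hMD; exact absurd hMD (by simp)
  · -- M ⊆ D
    rcases lt_or_eq_of_le h with hlt | heq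
    · rw [hMmax D hD hlt]
      exact Finset.inter_eq_right.mpr hYX
    · exfalso
      rw [← heq] at hssub
      exact (lt_irrefl _ hssub).elim
  · -- D ⊆ M
    exfalso
    have : D ∩ Y ⊆ M ∩ Y := Finset.inter_subset_inter h (le_refl _)
    exact (hssub.not_subset) this

lemma restrictT_insert_top {X : Finset ℕ} {G : PTree} {Y : Finset ℕ}
    (hYX : Y ⊆ X) (hY : Y.Nonempty) :
    restrictT (insert X G) Y = insert Y (restrictT G Y) := by
  ext D
  simp only [mem_restrictT, Finset.mem_insert]
  constructor
  · rintro ⟨⟨C, hC, rfl⟩, hne⟩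
    rcases hC with rfl | hC
    · left; exact Finset.inter_eq_right.mpr hYX
    · right; exact ⟨⟨C, hC, rfl⟩, hne⟩
  · rintro (rfl | hD)
    · exact ⟨⟨X, Or.inl rfl, Finset.inter_eq_right.mpr hYX⟩, hY⟩
    · obtain ⟨⟨C, hC, rfl⟩, hne⟩ := hD
      exact ⟨⟨C, Or.inr hC, rfl⟩, hne⟩

lemma restrictT_biUnion {s : Finset (Finset ℕ)} {f : Finset ℕ → PTree} {Y : Finset ℕ} :
    restrictT (s.biUnion f) Y = s.biUnion (fun A => restrictT (f A) Y) := by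
  ext D
  simp only [mem_restrictT, Finset.mem_biUnion]
  aesop

lemma adams_restrict_const (n : ℕ) : ∀ (X : Finset ℕ), X.card ≤ n →
    ∀ (P : List PTree) (B : PTree) (Y : Finset ℕ), P ≠ [] →
    (∀ T ∈ P, IsHierarchy X T) → Y ⊆ X → Y.Nonempty →
    (∀ T ∈ P, restrictT T Y = B) → restrictT (adams X P) Y = B := by
  induction n with
  | zero =>
    intro X hX P B Y _ _ hYX hY _
    have : 1 ≤ X.card := Finset.card_pos.mpr (hY.mono hYX)
    omega
  | succ n ih =>
    intro X hXn P B Y hP hh hYX hY hconst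
    have hXne : X.Nonempty := hY.mono hYX
    obtain ⟨T₀, hT₀⟩ := List.exists_mem_of_ne_nil P hP
    have hB : IsHierarchy Y B := by
      rw [← hconst T₀ hT₀]
      exact restrictT_isHierarchy (hh T₀ hT₀) hYX hY
    have hadams : IsHierarchy X (adams X P) :=
      adams_isHierarchy X.card X (le_refl _) P hP hh hXne
    rcases Nat.lt_or_ge Y.card 2 with h1 | h2Y
    · -- Y is a singleton
      have h1' : Y.card = 1 := by have := Finset.card_pos.mpr hY; omega
      obtain ⟨y, rfl⟩ := Finset.card_eq_one.mp h1'
      have hyX : y ∈ X := hYX (Finset.mem_singleton_self y)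
      rw [restrictT_singleton hadams hyX, ← hconst T₀ hT₀,
        restrictT_singleton (hh T₀ hT₀) hyX]
    · have h2X : 2 ≤ X.card := le_trans h2Y (Finset.card_le_card hYX)
      obtain ⟨hpart, _⟩ := blocksOf_spec hP hh h2X
      have hBpart := maxProper_isPart hB h2Y
      -- the trace of every block is ∅, Y, or a maximal proper cluster of B
      set SB : Finset (Finset ℕ) := insert Y (maxProper Y B) with hSB
      have hSBsub : ∀ u ∈ SB, u ⊆ Y := by
        intro u hu
        rcases Finset.mem_insert.mp hu with rfl | hu
        · exact Finset.Subset.refl _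
        · exact hB.subset_top u (maxProper_subset hu)
      have hSBB : ∀ u ∈ SB, u ∈ B := by
        intro u hu
        rcases Finset.mem_insert.mp hu with rfl | hu
        · exact hB.top_mem
        · exact maxProper_subset hu
      have hclos : ∀ A A', (A ∩ Y = ∅ ∨ A ∩ Y ∈ SB) → (A' ∩ Y = ∅ ∨ A' ∩ Y ∈ SB) →
          (A ∩ A').Nonempty → ((A ∩ A') ∩ Y = ∅ ∨ (A ∩ A') ∩ Y ∈ SB) := by
        intro A A' hA hA' _
        have hiter : (A ∩ A') ∩ Y = (A ∩ Y) ∩ (A' ∩ Y) := by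
          ext z; simp only [Finset.mem_inter]; tauto
        rcases hA with h | h
        · left; rw [hiter, h]; simp
        rcases hA' with h' | h'
        · left; rw [hiter, h']; simp
        rcases Finset.mem_insert.mp h with hY1 | hM1
        · right; rw [hiter, hY1, Finset.inter_eq_right.mpr (hSBsub _ h')]; exact h'
        rcases Finset.mem_insert.mp h' with hY2 | hM2
        · right; rw [hiter, hY2, Finset.inter_eq_left.mpr (hSBsub _ h)]; exact h
        by_cases heq : A ∩ Y = A' ∩ Y
        · right; rw [hiter, heq, Finset.inter_self]; exact h'
        · left; rw [hiter]; exact maxProper_disjoint hB hM1 hM2 heq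
      have htrace : ∀ A ∈ blocksOf X P, A ∩ Y = ∅ ∨ A ∩ Y ∈ SB := by
        apply blocksOf_closed _ hclos
        intro T hT M hM
        by_cases hne : (M ∩ Y).Nonempty
        · right
          by_cases hMY : M ∩ Y = Y
          · rw [hMY]; exact Finset.mem_insert_self Y _
          · apply Finset.mem_insert_of_mem
            have := maxProper_restrict_trace (hh T hT) hYX hM hne hMY
            rwa [hconst T hT] at this
        · left; rwa [Finset.not_nonempty_iff_eq_empty] at hne
      -- per-block computation
      have key : ∀ A ∈ blocksOf X P, (A ∩ Y).Nonempty →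
          restrictT (adams A (P.map (fun T => restrictT T A))) Y
            = B.filter (· ⊆ A ∩ Y) := by
        intro A hA hAY
        have hAne : A.Nonempty := (hpart.1 A hA).1
        have hAX : A ⊆ X := (hpart.1 A hA).2
        have hZSB : A ∩ Y ∈ SB := by
          rcases htrace A hA with h | h
          · rw [h] at hAY; exact absurd hAY (by simp)
          · exact h
        have hZB : A ∩ Y ∈ B := hSBB _ hZSB
        have hsubH := adams_sub_isHierarchy hP hh hAne hAX
        have hstep1 : restrictT (adams A (P.map (fun T => restrictT T A))) Y
            = restrictT (adams A (P.map (fun T => restrictT T A))) (A ∩ Y) :=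
          restrictT_congr_inter hsubH.subset_top
        have hcard : A.card < X.card := Finset.card_lt_card (Finset.mem_filter.mp hA).2
        have hstep2 : restrictT (adams A (P.map (fun T => restrictT T A))) (A ∩ Y)
            = restrictT B (A ∩ Y) := by
          refine ih A (by omega) _ (restrictT B (A ∩ Y)) (A ∩ Y) (by simp [hP]) ?_
            Finset.inter_subset_left hAY ?_
          · intro S hS
            obtain ⟨T, hT, rfl⟩ := List.mem_map.mp hS
            exact restrictT_isHierarchy (hh T hT) hAX hAne
          · intro S hS
            obtain ⟨T, hT, rfl⟩ := List.mem_map.mp hS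
            rw [restrictT_restrictT Finset.inter_subset_left,
              ← restrictT_restrictT (show A ∩ Y ⊆ Y from Finset.inter_subset_right),
              hconst T hT]
        rw [hstep1, hstep2, restrictT_eq_filter hB hZB]
      have key0 : ∀ A ∈ blocksOf X P, A ∩ Y = ∅ →
          restrictT (adams A (P.map (fun T => restrictT T A))) Y = ∅ := by
        intro A hA hAY
        have hAne : A.Nonempty := (hpart.1 A hA).1
        have hAX : A ⊆ X := (hpart.1 A hA).2
        have hsubH := adams_sub_isHierarchy hP hh hAne hAX
        rw [restrictT_congr_inter hsubH.subset_top, hAY, restrictT_empty]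
      -- assemble
      rw [adams_unfold hXne, restrictT_insert_top hYX hY, restrictT_biUnion]
      apply Finset.Subset.antisymm
      · intro D hD
        rcases Finset.mem_insert.mp hD with rfl | hD
        · exact hB.top_mem
        · obtain ⟨A, hA, hDA⟩ := Finset.mem_biUnion.mp hD
          by_cases hAY : (A ∩ Y).Nonempty
          · rw [key A hA hAY] at hDA
            exact (Finset.mem_filter.mp hDA).1
          · rw [Finset.not_nonempty_iff_eq_empty] at hAY
            rw [key0 A hA hAY] at hDA
            exact absurd hDA (Finset.notMem_empty D)
      · intro D hD
        by_cases hDY : D = Y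
        · subst hDY; exact Finset.mem_insert_self _ _
        · obtain ⟨M, hM, hDM⟩ := exists_maxProper_superset hB hD hDY
          obtain ⟨x, hxM⟩ := hB.cluster_nonempty M (maxProper_subset hM)
          have hxY : x ∈ Y := hB.subset_top M (maxProper_subset hM) hxM
          obtain ⟨A, hA, hxA⟩ := hpart.2.1 x (hYX hxY)
          have hAY : (A ∩ Y).Nonempty := ⟨x, Finset.mem_inter.mpr ⟨hxA, hxY⟩⟩
          have hZSB : A ∩ Y ∈ SB := by
            rcases htrace A hA with h | h
            · rw [h] at hAY; exact absurd hAY (by simp)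
            · exact h
          have hDsub : D ⊆ A ∩ Y := by
            rcases Finset.mem_insert.mp hZSB with hZ | hZ
            · rw [hZ]; exact hB.subset_top D hD
            · have : M = A ∩ Y := hBpart.eq_of_mem hM hZ hxM
                (Finset.mem_inter.mpr ⟨hxA, hxY⟩)
              rw [← this]; exact hDM
          refine Finset.mem_insert_of_mem (Finset.mem_biUnion.mpr ⟨A, hA, ?_⟩)
          rw [key A hA hAY]
          exact Finset.mem_filter.mpr ⟨hD, hDsub⟩
/-- Adams consensus satisfies binary extension stability: if the Adams
consensus of the restricted profile is binary, it equals the restriction of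
the Adams consensus of the profile. -/
theorem adams_binary_extension_stable (X : Finset ℕ) (P : List PTree)
    (hP : P ≠ []) (hh : ∀ T ∈ P, IsHierarchy X T)
    (Y : Finset ℕ) (hYX : Y ⊆ X) (hY : Y.Nonempty)
    (hbin : IsBinary Y (adams Y (P.map (fun T => restrictT T Y)))) :
    adams Y (P.map (fun T => restrictT T Y)) = restrictT (adams X P) Y := by
  have hQ : (P.map (fun T => restrictT T Y)) ≠ [] := by simp [hP]
  have hQh : ∀ S ∈ P.map (fun T => restrictT T Y), IsHierarchy Y S := by
    intro S hS
    obtain ⟨T, hT, rfl⟩ := List.mem_map.mp hS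
    exact restrictT_isHierarchy (hh T hT) hYX hY
  have hbin' : (adams Y (P.map (fun T => restrictT T Y))).card + 1 = 2 * Y.card := by
    have h1 : 1 ≤ Y.card := Finset.card_pos.mpr hY
    have := hbin
    unfold IsBinary at this
    omega
  have heach := adams_binary_inputs_eq Y.card Y (le_refl _) _ hQ hQh hY hbin'
  have hconst : ∀ T ∈ P, restrictT T Y = adams Y (P.map (fun T => restrictT T Y)) := by
    intro T hT
    exact heach (restrictT T Y) (List.mem_map.mpr ⟨T, hT, rfl⟩)
  exact (adams_restrict_const X.card X (le_refl _) P _ Y hP hh hYX hY hconst).symm
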